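/- arXiv:2508.05885 — 2 statements merged into one kernel-verified Lean document; each statement's English description precedes it below -/
import Mathlib

section
/- Let 𝔫 be a nilpotent Lie algebra with a bi-invariant complex structure J. If there exists a pluriclosed inner product on (𝔫,J), then 𝔫 is abelian. -/
variable {L : Type*} [LieRing L] [LieAlgebra ℝ L]

/-- A complex structure on a real Lie algebra: `J² = -1` and vanishing Nijenhuis tensor. -/
def IsComplexStructure (J : L →ₗ[ℝ] L) : Prop :=
  (∀ x : L, J (J x) = -x) ∧
    ∀ x y : L, ⁅x, y⁆ + J (⁅J x, y⁆ + ⁅x, J y⁆) - ⁅J x, J y⁆ = 0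

/-- The commutator ideal `𝔫' = [𝔫,𝔫]`. -/
def commutatorIdeal (L : Type*) [LieRing L] [LieAlgebra ℝ L] : LieIdeal ℝ L :=
  ⁅(⊤ : LieIdeal ℝ L), (⊤ : LieIdeal ℝ L)⁆

/-- A Hermitian inner product on `(L, J)`: a symmetric positive definite bilinear form
compatible with `J`. -/
def IsHermitianMetric (J : L →ₗ[ℝ] L) (B : LinearMap.BilinForm ℝ L) : Prop :=
  (∀ x y : L, B x y = B y x) ∧ (∀ x : L, x ≠ 0 → 0 < B x x) ∧
    ∀ x y : L, B (J x) (J y) = B x y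

/-- The exterior derivative of the torsion 3-form `c` of the Bismut connection of a
left invariant Hermitian structure, evaluated on `(w,u,y,z)` (formula (2.4) of the
paper). -/
def dcForm (J : L →ₗ[ℝ] L) (B : LinearMap.BilinForm ℝ L) (w u y z : L) : ℝ :=
  B ⁅J ⁅w, u⁆, J y⁆ z + B ⁅J y, J z⁆ ⁅w, u⁆ + B ⁅J z, J ⁅w, u⁆⁆ y
    - B ⁅J ⁅w, y⁆, J u⁆ z - B ⁅J u, J z⁆ ⁅w, y⁆ - B ⁅J z, J ⁅w, y⁆⁆ u
    + B ⁅J ⁅w, z⁆, J u⁆ y + B ⁅J u, J y⁆ ⁅w, z⁆ + B ⁅J y, J ⁅w, z⁆⁆ u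
    + B ⁅J ⁅u, y⁆, J w⁆ z + B ⁅J w, J z⁆ ⁅u, y⁆ + B ⁅J z, J ⁅u, y⁆⁆ w
    - B ⁅J ⁅u, z⁆, J w⁆ y - B ⁅J w, J y⁆ ⁅u, z⁆ - B ⁅J y, J ⁅u, z⁆⁆ w
    + B ⁅J ⁅y, z⁆, J w⁆ u + B ⁅J w, J u⁆ ⁅y, z⁆ + B ⁅J u, J ⁅y, z⁆⁆ w

/-- The Hermitian metric `B` is pluriclosed (SKT) for `J`: `dc = 0`. -/
def IsPluriclosed (J : L →ₗ[ℝ] L) (B : LinearMap.BilinForm ℝ L) : Prop :=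
  ∀ w u y z : L, dcForm J B w u y z = 0

/-- a nilpotent Lie algebra with a bi-invariant complex structure
admitting a pluriclosed Hermitian inner product is abelian. -/
theorem abelian_of_biinvariant_pluriclosed
    [LieRing.IsNilpotent L]
    (J : L →ₗ[ℝ] L) (hJ : IsComplexStructure J)
    (hbi : ∀ x y : L, J ⁅x, y⁆ = ⁅x, J y⁆)
    (B : LinearMap.BilinForm ℝ L) (hB : IsHermitianMetric J B)
    (hpc : IsPluriclosed J B) :
    IsLieAbelian L := by
  obtain ⟨hJ2, -⟩ := hJ
  obtain ⟨hBsymm, hBpos, hBJ⟩ := hB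
  have key : ∀ a b : L, ⁅a, J b⁆ = J ⁅a, b⁆ := fun a b => (hbi a b).symm
  have hJl : ∀ a b : L, ⁅J a, b⁆ = J ⁅a, b⁆ := by
    intro a b
    have : ⁅J a, b⁆ = -⁅b, J a⁆ := (lie_skew _ _).symm
    rw [this, key, ← lie_skew a b, map_neg]
  have hself : ∀ a : L, ⁅a, J a⁆ = 0 := by
    intro a; rw [key, lie_self, map_zero]
  constructor
  intro x y
  have h := hpc x (J x) y (J y)
  unfold dcForm at h
  simp only [hself, key, hJl, hJ2, hBJ, lie_zero, zero_lie, map_zero, map_neg, lie_neg,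
    neg_lie, neg_neg, LinearMap.zero_apply, LinearMap.neg_apply, LinearMap.map_zero,
    LinearMap.map_neg] at h
  have hs1 := hBsymm ⁅⁅x, y⁆, x⁆ y
  have hs2 := hBsymm ⁅⁅x, y⁆, y⁆ x
  have hs3 := hBsymm ⁅x, ⁅x, y⁆⁆ y
  have hs4 := hBsymm ⁅y, ⁅x, y⁆⁆ x
  have hzero : B ⁅x, y⁆ ⁅x, y⁆ = 0 := by
    have e1 : ⁅x, ⁅x, y⁆⁆ = -⁅⁅x, y⁆, x⁆ := by rw [← lie_skew]
    nlinarith [h, hs1, hs2]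
  by_contra hne
  exact absurd hzero (ne_of_gt (hBpos ⁅x, y⁆ hne))
end

section
/- Let (𝔫, J, ⟨·,·⟩) be a Hermitian nilpotent Lie algebra with dim 𝔫' = 1 and dim 𝔫 = 2d. Then ⟨·,·⟩ is pluriclosed if and only if 𝔫 is isomorphic to ℝ^{2d-3} ⊕ 𝔥₃, where 𝔥₃ is the 3-dimensional Heisenberg Lie algebra. -/
variable {L : Type*} [LieRing L] [LieAlgebra ℝ L]

/-- Strictly upper triangular `3×3` real matrices, as a submodule. -/
def strictUpperSubmodule : Submodule ℝ (Matrix (Fin 3) (Fin 3) ℝ) where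
  carrier := {M | ∀ i j : Fin 3, j ≤ i → M i j = 0}
  add_mem' := by
    intro a b ha hb i j h
    simp [Matrix.add_apply, ha i j h, hb i j h]
  zero_mem' := by intro i j h; simp
  smul_mem' := by
    intro c a ha i j h
    simp [Matrix.smul_apply, ha i j h]

lemma strictUpper_mul_mem {M N : Matrix (Fin 3) (Fin 3) ℝ}
    (hM : M ∈ strictUpperSubmodule) (hN : N ∈ strictUpperSubmodule) :
    M * N ∈ strictUpperSubmodule := by
  intro i j hji
  rw [Matrix.mul_apply]
  apply Finset.sum_eq_zero
  intro k _
  rcases le_or_gt k i with h | h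
  · rw [hM i k h, zero_mul]
  · rw [hN k j (hji.trans h.le), mul_zero]

attribute [local instance] LieRing.ofAssociativeRing

/-- The 3-dimensional Heisenberg Lie algebra `𝔥₃`, realized as the Lie algebra of
strictly upper triangular `3×3` real matrices. -/
def heisenberg3 : LieSubalgebra ℝ (Matrix (Fin 3) (Fin 3) ℝ) :=
  { strictUpperSubmodule with
    lie_mem' := fun {x y} hx hy => by
      have : ⁅x, y⁆ = x * y - y * x := Ring.lie_def x y
      show ⁅x, y⁆ ∈ strictUpperSubmodule
      rw [this]
      exact sub_mem (strictUpper_mul_mem hx hy) (strictUpper_mul_mem hy hx) }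

noncomputable instance prodLieRing (L₁ L₂ : Type*) [LieRing L₁] [LieRing L₂] :
    LieRing (L₁ × L₂) :=
  { (inferInstance : AddCommGroup (L₁ × L₂)) with
    bracket := fun x y => (⁅x.1, y.1⁆, ⁅x.2, y.2⁆)
    add_lie := fun x y z => Prod.ext (add_lie x.1 y.1 z.1) (add_lie x.2 y.2 z.2)
    lie_add := fun x y z => Prod.ext (lie_add x.1 y.1 z.1) (lie_add x.2 y.2 z.2)
    lie_self := fun x => Prod.ext (lie_self x.1) (lie_self x.2)
    leibniz_lie := fun x y z =>
      Prod.ext (leibniz_lie x.1 y.1 z.1) (leibniz_lie x.2 y.2 z.2) }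

noncomputable instance prodLieAlgebra (L₁ L₂ : Type*) [LieRing L₁] [LieRing L₂]
    [LieAlgebra ℝ L₁] [LieAlgebra ℝ L₂] : LieAlgebra ℝ (L₁ × L₂) :=
  { lie_smul := fun r x y => Prod.ext (lie_smul r x.1 y.1) (lie_smul r x.2 y.2) }

noncomputable def E01 : Matrix (Fin 3) (Fin 3) ℝ := Matrix.single 0 1 1
noncomputable def E12 : Matrix (Fin 3) (Fin 3) ℝ := Matrix.single 1 2 1
noncomputable def E02 : Matrix (Fin 3) (Fin 3) ℝ := Matrix.single 0 2 1

lemma E01_mem : E01 ∈ strictUpperSubmodule := by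
  intro i j h; fin_cases i <;> fin_cases j <;> simp_all [E01, Matrix.single] <;> omega

lemma E12_mem : E12 ∈ strictUpperSubmodule := by
  intro i j h; fin_cases i <;> fin_cases j <;> simp_all [E12, Matrix.single] <;> omega

lemma E02_mem : E02 ∈ strictUpperSubmodule := by
  intro i j h; fin_cases i <;> fin_cases j <;> simp_all [E02, Matrix.single] <;> omega

lemma combo_mem (r s t : ℝ) : r • E01 - s • E12 + t • E02 ∈ strictUpperSubmodule :=
  add_mem (sub_mem (Submodule.smul_mem _ _ E01_mem) (Submodule.smul_mem _ _ E12_mem))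
    (Submodule.smul_mem _ _ E02_mem)

lemma combo_01 (r s t : ℝ) : (r • E01 - s • E12 + t • E02) 0 1 = r := by
  simp [E01, E12, E02, Matrix.single, Matrix.add_apply, Matrix.sub_apply,
    Matrix.smul_apply]

lemma combo_12 (r s t : ℝ) : (r • E01 - s • E12 + t • E02) 1 2 = -s := by
  simp [E01, E12, E02, Matrix.single, Matrix.add_apply, Matrix.sub_apply,
    Matrix.smul_apply]

lemma combo_02 (r s t : ℝ) : (r • E01 - s • E12 + t • E02) 0 2 = t := by
  simp [E01, E12, E02, Matrix.single, Matrix.add_apply, Matrix.sub_apply,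
    Matrix.smul_apply]

lemma combo_E02 : (0 : ℝ) • E01 - (0 : ℝ) • E12 + (1 : ℝ) • E02 = E02 := by
  simp

lemma upper_entries {M : Matrix (Fin 3) (Fin 3) ℝ} (hM : M ∈ strictUpperSubmodule) :
    M 0 0 = 0 ∧ M 1 0 = 0 ∧ M 1 1 = 0 ∧ M 2 0 = 0 ∧ M 2 1 = 0 ∧ M 2 2 = 0 :=
  ⟨hM 0 0 (by decide), hM 1 0 (by decide), hM 1 1 (by decide), hM 2 0 (by decide),
    hM 2 1 (by decide), hM 2 2 (by decide)⟩

lemma upper_eq {M : Matrix (Fin 3) (Fin 3) ℝ} (hM : M ∈ strictUpperSubmodule) :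
    M = M 0 1 • E01 + M 1 2 • E12 + M 0 2 • E02 := by
  obtain ⟨m1, m2, m3, m4, m5, m6⟩ := upper_entries hM
  ext i j
  fin_cases i <;> fin_cases j <;>
    simp_all [E01, E12, E02, Matrix.single, Matrix.add_apply, Matrix.smul_apply]

lemma upper_mul_sub {M N : Matrix (Fin 3) (Fin 3) ℝ} (hM : M ∈ strictUpperSubmodule)
    (hN : N ∈ strictUpperSubmodule) :
    M * N - N * M = (M 0 1 * N 1 2 - N 0 1 * M 1 2) • E02 := by
  obtain ⟨m1, m2, m3, m4, m5, m6⟩ := upper_entries hM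
  obtain ⟨n1, n2, n3, n4, n5, n6⟩ := upper_entries hN
  ext i j
  fin_cases i <;> fin_cases j <;>
    simp_all [Matrix.mul_apply, Fin.sum_univ_three, Matrix.sub_apply, Matrix.smul_apply,
      E02, Matrix.single] <;> ring

lemma mem_heis {M : Matrix (Fin 3) (Fin 3) ℝ} (h : M ∈ strictUpperSubmodule) :
    M ∈ heisenberg3 := h

lemma heis_mem_upper (M : ↥heisenberg3) : (M : Matrix (Fin 3) (Fin 3) ℝ) ∈ strictUpperSubmodule :=
  M.2

noncomputable def heisEquiv : ↥heisenberg3 ≃ₗ[ℝ] (Fin 3 → ℝ) where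
  toFun M := ![(M : Matrix (Fin 3) (Fin 3) ℝ) 0 1, (M : Matrix (Fin 3) (Fin 3) ℝ) 1 2,
    (M : Matrix (Fin 3) (Fin 3) ℝ) 0 2]
  map_add' M N := by
    funext i; fin_cases i <;> simp
  map_smul' r M := by
    funext i; fin_cases i <;> rfl
  invFun v := ⟨v 0 • E01 + v 1 • E12 + v 2 • E02,
    mem_heis (add_mem (add_mem (Submodule.smul_mem _ _ E01_mem) (Submodule.smul_mem _ _ E12_mem))
      (Submodule.smul_mem _ _ E02_mem))⟩
  left_inv M := by
    apply Subtype.ext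
    simp only []
    exact (upper_eq (heis_mem_upper M)).symm
  right_inv v := by
    funext i
    fin_cases i <;>
      simp [E01, E12, E02, Matrix.single, Matrix.add_apply, Matrix.smul_apply]

lemma finrank_heis : Module.finrank ℝ ↥heisenberg3 = 3 := by
  rw [heisEquiv.finrank_eq, Module.finrank_fin_fun]

noncomputable instance : FiniteDimensional ℝ ↥heisenberg3 :=
  Module.Finite.equiv heisEquiv.symm

/-- bracket in the product, second component in `𝔥₃`. -/
lemma prod_bracket_eq {n : ℕ} (s t : (Fin n → ℝ) × ↥heisenberg3) :
    ⁅s, t⁆ = ((s.2 : Matrix (Fin 3) (Fin 3) ℝ) 0 1 * (t.2 : Matrix (Fin 3) (Fin 3) ℝ) 1 2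
      - (t.2 : Matrix (Fin 3) (Fin 3) ℝ) 0 1 * (s.2 : Matrix (Fin 3) (Fin 3) ℝ) 1 2) •
      ((0, ⟨E02, mem_heis E02_mem⟩) : (Fin n → ℝ) × ↥heisenberg3) := by
  have h1 : (⁅s, t⁆ : (Fin n → ℝ) × ↥heisenberg3).1 = ⁅s.1, t.1⁆ := rfl
  have h2 : (⁅s, t⁆ : (Fin n → ℝ) × ↥heisenberg3).2 = ⁅s.2, t.2⁆ := rfl
  refine Prod.ext ?_ ?_
  · rw [h1]
    funext i
    have : ⁅s.1, t.1⁆ i = ⁅s.1 i, t.1 i⁆ := rfl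
    rw [this, Ring.lie_def]
    simp [mul_comm]
  · rw [h2]
    apply Subtype.ext
    have : ((⁅s.2, t.2⁆ : ↥heisenberg3) : Matrix (Fin 3) (Fin 3) ℝ)
        = ⁅(s.2 : Matrix (Fin 3) (Fin 3) ℝ), (t.2 : Matrix (Fin 3) (Fin 3) ℝ)⁆ := rfl
    rw [this, Ring.lie_def, upper_mul_sub (heis_mem_upper s.2) (heis_mem_upper t.2)]
    rfl

set_option maxHeartbeats 1000000 in
/-- a Hermitian nilpotent Lie algebra of dimension `2d` with
1-dimensional commutator has a pluriclosed metric iff it is isomorphic to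
`ℝ^{2d-3} ⊕ 𝔥₃`. -/
theorem pluriclosed_iff_iso_heisenberg
    [FiniteDimensional ℝ L] [LieRing.IsNilpotent L] (d : ℕ)
    (hdim : Module.finrank ℝ L = 2 * d)
    (hcomm : Module.finrank ℝ (commutatorIdeal L : Submodule ℝ L) = 1)
    (J : L →ₗ[ℝ] L) (hJ : IsComplexStructure J)
    (B : LinearMap.BilinForm ℝ L) (hB : IsHermitianMetric J B) :
    IsPluriclosed J B ↔
      Nonempty (L ≃ₗ⁅ℝ⁆ ((Fin (2 * d - 3) → ℝ) × ↥heisenberg3)) := by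
  classical
  have hmemN : ∀ x y : L, ⁅x, y⁆ ∈ (commutatorIdeal L : Submodule ℝ L) := fun x y =>
    (LieSubmodule.mem_toSubmodule _).mpr
      (LieSubmodule.lie_mem_lie (LieSubmodule.mem_top x) (LieSubmodule.mem_top y))
  let bN : Module.Basis (Fin 1) ℝ (commutatorIdeal L : Submodule ℝ L) :=
    Module.finBasisOfFinrankEq ℝ _ hcomm
  set e : L := (bN 0 : L) with he_def
  have he0 : e ≠ 0 := by
    intro h
    exact bN.ne_zero 0 (Subtype.coe_injective (by simpa [he_def] using h))
  obtain ⟨π, hπ⟩ := LinearMap.exists_extend (bN.coord 0)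
  have hπmem : ∀ (x : L) (hx : x ∈ (commutatorIdeal L : Submodule ℝ L)),
      π x = bN.coord 0 ⟨x, hx⟩ := by
    intro x hx
    have := congrArg (fun φ => φ (⟨x, hx⟩ : (commutatorIdeal L : Submodule ℝ L))) hπ
    exact this
  have hπe : π e = 1 := by
    rw [he_def, hπmem _ (bN 0).2]
    simp [Module.Basis.coord_apply]
    show bN.repr (bN 0) 0 = 1
    rw [Module.Basis.repr_self, Finsupp.single_eq_same]
  have hbr : ∀ x y : L, ⁅x, y⁆ = π ⁅x, y⁆ • e := by
    intro x y
    have h1 : (⟨⁅x, y⁆, hmemN x y⟩ : (commutatorIdeal L : Submodule ℝ L))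
        = bN.coord 0 ⟨⁅x, y⁆, hmemN x y⟩ • bN 0 := by
      have h2 := bN.sum_repr (⟨⁅x, y⁆, hmemN x y⟩ : (commutatorIdeal L : Submodule ℝ L))
      rw [Module.Basis.coord_apply]
      exact h2.symm.trans (Fin.sum_univ_one _)
    have h3 := congrArg (Subtype.val) h1
    rw [hπmem _ (hmemN x y)]
    exact h3
  -- centrality
  have hcentral : ∀ x : L, ⁅x, e⁆ = 0 := by
    intro x
    obtain ⟨k, hk⟩ := LieAlgebra.nilpotent_ad_of_nilpotent_algebra ℝ L
    have hiter : ∀ m : ℕ, ((LieAlgebra.ad ℝ L x) ^ m) e = (π ⁅x, e⁆) ^ m • e := by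
      intro m
      induction m with
      | zero => simp
      | succ m ih =>
        rw [pow_succ' (LieAlgebra.ad ℝ L x) m, Module.End.mul_apply, ih, map_smul,
          LieAlgebra.ad_apply]
        nth_rewrite 2 [hbr x e]
        rw [smul_smul, pow_succ]
    have hk1 : (LieAlgebra.ad ℝ L x) ^ (k + 1) = 0 := by rw [pow_succ, hk x, zero_mul]
    have h0 := hiter (k + 1)
    rw [hk1] at h0
    have h1 : (π ⁅x, e⁆) ^ (k + 1) • e = 0 := by simpa using h0.symm
    have h2 : (π ⁅x, e⁆) ^ (k + 1) = 0 := by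
      rcases smul_eq_zero.mp h1 with h | h
      · exact h
      · exact absurd h he0
    have h3 : π ⁅x, e⁆ = 0 := pow_eq_zero_iff (Nat.succ_ne_zero k) |>.mp h2
    rw [hbr x e, h3, zero_smul]
  have hcentral' : ∀ x : L, ⁅e, x⁆ = 0 := fun x => by
    rw [← lie_skew, hcentral x, neg_zero]
  have hπxe : ∀ x : L, π ⁅x, e⁆ = 0 := fun x => by rw [hcentral x, map_zero]
  have hπex : ∀ x : L, π ⁅e, x⁆ = 0 := fun x => by rw [hcentral' x, map_zero]
  -- independence of e and J e
  have hind : ∀ a b : ℝ, a • e + b • J e = 0 → a = 0 := by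
    intro a b hab
    rcases eq_or_ne b 0 with hb | hb
    · rw [hb, zero_smul, add_zero] at hab
      rcases smul_eq_zero.mp hab with h | h
      · exact h
      · exact absurd h he0
    · exfalso
      have hJe : J e = (-(a / b)) • e := by
        have h1 : b • J e = (-a) • e := by
          rw [neg_smul, eq_neg_iff_add_eq_zero, add_comm]
          exact hab
        have h2 := congrArg (fun v => b⁻¹ • v) h1
        simp only [smul_smul, inv_mul_cancel₀ hb, one_smul] at h2
        rw [h2]
        congr 1
        field_simp
      have h3 := hJ.1 e
      rw [hJe, map_smul, hJe, smul_smul] at h3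
      have h4 : (-(a / b) * -(a / b) + 1) • e = 0 := by
        rw [add_smul, one_smul, h3]; abel
      rcases smul_eq_zero.mp h4 with h | h
      · nlinarith [sq_nonneg (a / b)]
      · exact he0 h
  -- abelian complex structure
  have hJJ : ∀ x y : L, π ⁅J x, J y⁆ = π ⁅x, y⁆ := by
    intro x y
    have hint := hJ.2 x y
    have h1 : (π ⁅x, y⁆ - π ⁅J x, J y⁆) • e + (π ⁅J x, y⁆ + π ⁅x, J y⁆) • J e = 0 := by
      have e1 := hbr x y
      have e2 := hbr (J x) (J y)
      have e3 := hbr (J x) y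
      have e4 := hbr x (J y)
      rw [e1, e2, e3, e4, ← sub_eq_zero] at hint
      rw [← hint, map_add, map_smul, map_smul]
      module
    have h2 := hind _ _ h1
    linarith [h2]
  -- dc formula
  have hz1 : ∀ a b c : L, ⁅J ⁅a, b⁆, J c⁆ = 0 := by
    intro a b c
    rw [hbr a b, map_smul, smul_lie, hbr (J e) (J c), hJJ, hπex, zero_smul, smul_zero]
  have hz2 : ∀ a b c : L, ⁅J c, J ⁅a, b⁆⁆ = 0 := by
    intro a b c
    rw [hbr a b, map_smul, lie_smul, hbr (J c) (J e), hJJ, hπxe, zero_smul, smul_zero]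
  have hBe : ∀ a b x y : L, B ⁅J a, J b⁆ ⁅x, y⁆ = π ⁅a, b⁆ * π ⁅x, y⁆ * B e e := by
    intro a b x y
    rw [hbr (J a) (J b), hJJ, hbr x y]
    simp only [map_smul, LinearMap.smul_apply, smul_eq_mul, hπe]
    ring
  have hdc : ∀ w u y z : L, dcForm J B w u y z =
      2 * B e e * (π ⁅w, u⁆ * π ⁅y, z⁆ - π ⁅w, y⁆ * π ⁅u, z⁆ + π ⁅w, z⁆ * π ⁅u, y⁆) := by
    intro w u y z
    rw [dcForm, hz1 w u y, hz1 w y u, hz1 w z u, hz1 u y w, hz1 u z w, hz1 y z w,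
      hz2 w u z, hz2 w y z, hz2 w z y, hz2 u y z, hz2 u z y, hz2 y z u,
      hBe y z w u, hBe u z w y, hBe u y w z, hBe w z u y, hBe w y u z, hBe w u y z]
    simp only [map_zero, LinearMap.zero_apply]
    ring
  have hBee : 0 < B e e := hB.2.1 e he0
  have hPiff : IsPluriclosed J B ↔ ∀ w u y z : L,
      π ⁅w, u⁆ * π ⁅y, z⁆ - π ⁅w, y⁆ * π ⁅u, z⁆ + π ⁅w, z⁆ * π ⁅u, y⁆ = 0 := by
    constructor
    · intro hp w u y z
      have h1 := hp w u y z
      rw [hdc] at h1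
      have h2 : (2 : ℝ) * B e e ≠ 0 := by positivity
      exact (mul_eq_zero.mp h1).resolve_left h2
    · intro hp w u y z
      rw [hdc, hp, mul_zero]
  have hexist : ∃ x₁ x₂ : L, π ⁅x₁, x₂⁆ ≠ 0 := by
    by_contra hno
    push_neg at hno
    have hzero : ∀ x y : L, ⁅x, y⁆ = (0 : L) := fun x y => by
      rw [hbr x y, hno, zero_smul]
    have hbot : commutatorIdeal L = ⊥ := by
      rw [commutatorIdeal, LieSubmodule.lie_eq_bot_iff]
      intro x _ m _
      exact hzero x m
    rw [show (commutatorIdeal L : Submodule ℝ L)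
        = LieSubmodule.toSubmodule (commutatorIdeal L) from rfl, hbot] at hcomm
    simp at hcomm
  constructor
  · -- pluriclosed ⟹ isomorphism
    intro hpc
    have hP := hPiff.mp hpc
    obtain ⟨x₁, x₂₀, hx₀⟩ := hexist
    set x₂ : L := (π ⁅x₁, x₂₀⁆)⁻¹ • x₂₀ with hx₂def
    have hx12 : π ⁅x₁, x₂⁆ = 1 := by
      rw [hx₂def, lie_smul, map_smul, smul_eq_mul, inv_mul_cancel₀ hx₀]
    let f : L →ₗ[ℝ] ℝ :=
      { toFun := fun w => π ⁅w, x₁⁆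
        map_add' := fun a b => by simp only [add_lie, map_add]
        map_smul' := fun r a => by
          simp only [smul_lie, map_smul, RingHom.id_apply, smul_eq_mul] }
    let g : L →ₗ[ℝ] ℝ :=
      { toFun := fun w => π ⁅w, x₂⁆
        map_add' := fun a b => by simp only [add_lie, map_add]
        map_smul' := fun r a => by
          simp only [smul_lie, map_smul, RingHom.id_apply, smul_eq_mul] }
    have hfapp : ∀ w : L, f w = π ⁅w, x₁⁆ := fun w => rfl
    have hgapp : ∀ w : L, g w = π ⁅w, x₂⁆ := fun w => rfl
    have hf1 : f x₁ = 0 := by rw [hfapp, lie_self, map_zero]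
    have hg1 : g x₁ = 1 := hx12
    have hf2 : f x₂ = -1 := by
      rw [hfapp, (lie_skew x₂ x₁).symm, map_neg, hx12]
    have hg2 : g x₂ = 0 := by rw [hgapp, lie_self, map_zero]
    have hfe : f e = 0 := hπex x₁
    have hge : g e = 0 := hπex x₂
    have hdec : ∀ w u : L, π ⁅w, u⁆ = f w * g u - g w * f u := by
      intro w u
      have h := hP w u x₁ x₂
      rw [hx12, mul_one] at h
      rw [hfapp, hfapp, hgapp, hgapp]
      linarith
    set Z : Submodule ℝ L := LinearMap.ker (f.prod g) with hZdef
    have hrange : LinearMap.range (f.prod g) = ⊤ := by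
      rw [eq_top_iff]
      rintro ⟨a, b⟩ -
      refine ⟨b • x₁ - a • x₂, ?_⟩
      rw [LinearMap.prod_apply]
      refine Prod.ext ?_ ?_ <;>
        simp [map_sub, map_smul, hf1, hf2, hg1, hg2] <;> ring
    have hfinZ : Module.finrank ℝ Z + 2 = 2 * d := by
      have h1 := LinearMap.finrank_range_add_finrank_ker (f.prod g)
      rw [hrange, finrank_top, hdim, ← hZdef] at h1
      have h2 : Module.finrank ℝ (ℝ × ℝ) = 2 := by
        rw [Module.finrank_prod, Module.finrank_self]
      omega
    have heZ : e ∈ Z := by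
      rw [hZdef, LinearMap.mem_ker, LinearMap.prod_apply]
      exact Prod.ext (by simpa using hfe) (by simpa using hge)
    set ε : Z := ⟨e, heZ⟩ with hεdef
    have hε : ε ≠ 0 := fun h => he0 (by simpa [hεdef] using congrArg Subtype.val h)
    obtain ⟨q, hq⟩ := Submodule.exists_isCompl (ℝ ∙ ε)
    have hp1 : Module.finrank ℝ (ℝ ∙ ε : Submodule ℝ Z) = 1 := finrank_span_singleton hε
    have hpq := Submodule.finrank_add_eq_of_isCompl hq
    rw [hp1] at hpq
    have hqn : Module.finrank ℝ q = 2 * d - 3 := by omega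
    have h3le : 3 ≤ 2 * d := by omega
    let bq : Module.Basis (Fin (2 * d - 3)) ℝ q := Module.finBasisOfFinrankEq ℝ q hqn
    set projp := (ℝ ∙ ε).linearProjOfIsCompl q hq with hprojp
    set projq := q.linearProjOfIsCompl (ℝ ∙ ε) hq.symm with hprojq
    let coordε := LinearEquiv.toSpanNonzeroSingleton ℝ Z ε hε
    obtain ⟨h, hh⟩ := LinearMap.exists_extend (coordε.symm.toLinearMap ∘ₗ projp)
    obtain ⟨c, hc⟩ := LinearMap.exists_extend (bq.equivFun.toLinearMap ∘ₗ projq)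
    have happ : ∀ z : Z, h (z : L) = coordε.symm (projp z) := fun z =>
      congrArg (fun φ => φ z) hh
    have hcapp : ∀ z : Z, c (z : L) = bq.equivFun (projq z) := fun z =>
      congrArg (fun φ => φ z) hc
    have hεp : ε ∈ (ℝ ∙ ε : Submodule ℝ Z) := Submodule.mem_span_singleton_self ε
    have hhe : h e = 1 := by
      rw [show (e : L) = ((ε : Z) : L) from rfl, happ ε]
      rw [show projp ε = ⟨ε, hεp⟩ from
        Submodule.linearProjOfIsCompl_apply_left hq ⟨ε, hεp⟩]
      exact LinearEquiv.coord_self ℝ Z ε hε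
    have hce : c e = 0 := by
      rw [show (e : L) = ((ε : Z) : L) from rfl, hcapp ε]
      exact (congrArg bq.equivFun (Submodule.linearProjOfIsCompl_apply_right' hq.symm hεp)).trans
        (map_zero _)
    -- the matrix part
    let m0 : L →ₗ[ℝ] Matrix (Fin 3) (Fin 3) ℝ :=
      g.smulRight E01 - f.smulRight E12 + h.smulRight E02
    have hm0 : ∀ x : L, m0 x = g x • E01 - f x • E12 + h x • E02 := fun x => by
      show (g.smulRight E01 - f.smulRight E12 + h.smulRight E02) x = _
      rw [LinearMap.add_apply, LinearMap.sub_apply, LinearMap.smulRight_apply,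
        LinearMap.smulRight_apply, LinearMap.smulRight_apply]
    have hm0mem : ∀ x : L, m0 x ∈ strictUpperSubmodule := fun x => by
      rw [hm0]; exact combo_mem _ _ _
    have hm01 : ∀ x : L, m0 x 0 1 = g x := fun x => by
      rw [hm0]; exact combo_01 _ _ _
    have hm12 : ∀ x : L, m0 x 1 2 = -f x := fun x => by
      rw [hm0]; exact combo_12 _ _ _
    have hm02 : ∀ x : L, m0 x 0 2 = h x := fun x => by
      rw [hm0]; exact combo_02 _ _ _
    let m : L →ₗ[ℝ] ↥heisenberg3 :=
      { toFun := fun x => ⟨m0 x, hm0mem x⟩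
        map_add' := fun a b => Subtype.ext (by simp [map_add])
        map_smul' := fun r a => Subtype.ext (by simp [map_smul]) }
    let Φ : L →ₗ[ℝ] (Fin (2 * d - 3) → ℝ) × ↥heisenberg3 := c.prod m
    have hΦ1 : ∀ x : L, (Φ x).1 = c x := fun x => rfl
    have hΦ2 : ∀ x : L, ((Φ x).2 : Matrix (Fin 3) (Fin 3) ℝ) = m0 x := fun x => rfl
    have hker : ∀ x : L, Φ x = 0 → x = 0 := by
      intro x hx
      have hc0 : c x = 0 := congrArg Prod.fst hx
      have hm0x : m0 x = 0 := by
        have := congrArg (fun t : (Fin (2 * d - 3) → ℝ) × ↥heisenberg3 =>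
          (t.2 : Matrix (Fin 3) (Fin 3) ℝ)) hx
        simpa [hΦ2] using this
      have hgx : g x = 0 := by rw [← hm01 x, hm0x]; rfl
      have hfx : f x = 0 := by
        have h1 : -f x = 0 := by rw [← hm12 x, hm0x]; rfl
        linarith
      have hhx : h x = 0 := by rw [← hm02 x, hm0x]; rfl
      have hxZ : x ∈ Z := by
        rw [hZdef, LinearMap.mem_ker, LinearMap.prod_apply]
        exact Prod.ext (by simpa using hfx) (by simpa using hgx)
      have h1 : coordε.symm (projp ⟨x, hxZ⟩) = 0 := by rw [← happ ⟨x, hxZ⟩]; exact hhx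
      have hp0 : projp ⟨x, hxZ⟩ = 0 := by
        have := coordε.symm.map_eq_zero_iff.mp h1
        exact this
      have h2 : bq.equivFun (projq ⟨x, hxZ⟩) = 0 := by rw [← hcapp ⟨x, hxZ⟩]; exact hc0
      have hq0 : projq ⟨x, hxZ⟩ = 0 := bq.equivFun.map_eq_zero_iff.mp h2
      have h3 : ((projp ⟨x, hxZ⟩ : Z) + (projq ⟨x, hxZ⟩ : Z)) = (⟨x, hxZ⟩ : Z) :=
        Submodule.projection_add_projection_eq_self hq (⟨x, hxZ⟩ : Z)
      rw [hp0, hq0] at h3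
      have h4 : (⟨x, hxZ⟩ : Z) = 0 := by
        apply Subtype.ext
        simpa using h3.symm
      simpa using congrArg Subtype.val h4
    have hinj : Function.Injective Φ := by
      rw [← LinearMap.ker_eq_bot]
      exact (Submodule.eq_bot_iff _).mpr fun x hx => hker x (LinearMap.mem_ker.mp hx)
    have hfr : Module.finrank ℝ L
        = Module.finrank ℝ ((Fin (2 * d - 3) → ℝ) × ↥heisenberg3) := by
      rw [hdim, Module.finrank_prod, finrank_heis, Module.finrank_fin_fun]
      omega
    have hsurj := (LinearMap.injective_iff_surjective_of_finrank_eq_finrank hfr).mp hinj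
    let eΦ := LinearEquiv.ofBijective Φ ⟨hinj, hsurj⟩
    have hΦe : Φ e = ((0 : Fin (2 * d - 3) → ℝ), (⟨E02, mem_heis E02_mem⟩ : ↥heisenberg3)) := by
      refine Prod.ext ?_ ?_
      · exact hce
      · apply Subtype.ext
        rw [hΦ2, hm0, hfe, hge, hhe]
        exact combo_E02
    have hlie : ∀ x y : L, Φ ⁅x, y⁆ = ⁅Φ x, Φ y⁆ := by
      intro x y
      rw [hbr x y, map_smul, hΦe, prod_bracket_eq (Φ x) (Φ y)]
      congr 1
      rw [hΦ2, hΦ2, hm01, hm12, hm01, hm12, hdec x y]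
      ring
    exact ⟨{ toLinearMap := Φ, map_lie' := fun {x y} => hlie x y,
             invFun := eΦ.symm, left_inv := eΦ.left_inv, right_inv := eΦ.right_inv }⟩
  · -- isomorphism ⟹ pluriclosed
    rintro ⟨φ⟩
    apply hPiff.mpr
    obtain ⟨x₁, x₂, hx₀⟩ := hexist
    set E02T : (Fin (2 * d - 3) → ℝ) × ↥heisenberg3 := (0, ⟨E02, mem_heis E02_mem⟩) with hE02T
    set a : L → ℝ := fun x => ((φ x).2 : Matrix (Fin 3) (Fin 3) ℝ) 0 1 with ha
    set b : L → ℝ := fun x => ((φ x).2 : Matrix (Fin 3) (Fin 3) ℝ) 1 2 with hb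
    have hkey : ∀ x y : L, π ⁅x, y⁆ • φ e = (a x * b y - a y * b x) • E02T := by
      intro x y
      have h1 : φ ⁅x, y⁆ = ⁅φ x, φ y⁆ := φ.map_lie x y
      rw [hbr x y] at h1
      rw [show φ (π ⁅x, y⁆ • e) = π ⁅x, y⁆ • φ e from φ.toLinearEquiv.map_smul _ _] at h1
      rw [prod_bracket_eq (φ x) (φ y)] at h1
      exact h1
    obtain ⟨κ, hκeq⟩ : ∃ κ : ℝ, φ e = κ • E02T := by
      refine ⟨(π ⁅x₁, x₂⁆)⁻¹ * (a x₁ * b x₂ - a x₂ * b x₁), ?_⟩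
      calc φ e = (π ⁅x₁, x₂⁆)⁻¹ • (π ⁅x₁, x₂⁆ • φ e) := by
            rw [smul_smul, inv_mul_cancel₀ hx₀, one_smul]
        _ = (π ⁅x₁, x₂⁆)⁻¹ • ((a x₁ * b x₂ - a x₂ * b x₁) • E02T) := by rw [hkey x₁ x₂]
        _ = _ := by rw [smul_smul]
    have hκ0 : κ ≠ 0 := by
      intro h0
      rw [h0, zero_smul] at hκeq
      exact he0 (φ.toLinearEquiv.map_eq_zero_iff.mp hκeq)
    have hE : ∀ r : ℝ, ((r • E02T).2 : Matrix (Fin 3) (Fin 3) ℝ) 0 2 = r := fun r => by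
      show ((r • E02) : Matrix (Fin 3) (Fin 3) ℝ) 0 2 = r
      simp [E02, Matrix.single]
    have hsc : ∀ x y : L, π ⁅x, y⁆ * κ = a x * b y - a y * b x := by
      intro x y
      have h1 := hkey x y
      rw [hκeq, smul_smul] at h1
      have h2 := congrArg (fun t : (Fin (2 * d - 3) → ℝ) × ↥heisenberg3 =>
        ((t.2 : Matrix (Fin 3) (Fin 3) ℝ)) 0 2) h1
      simpa only [hE] using h2
    have hval : ∀ x y : L, π ⁅x, y⁆ = κ⁻¹ * (a x * b y - a y * b x) := by
      intro x y
      rw [← hsc x y]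
      field_simp
    intro w u y z
    rw [hval w u, hval y z, hval w y, hval u z, hval w z, hval u y]
    ring
end
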